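/- Simes' inequality: Let p_1 ≤ p_2 ≤ ... ≤ p_M be the order statistics of M independent random variables each uniformly distributed on [0,1]. Then for any α ∈ [0,1], the probability that p_m < (m/M)·α for at least one m ∈ {1,...,M} equals α. -/

import Mathlib

/-!
Sort the uniforms into the bins `[j α/M, (j+1) α/M)`, `j < M`, and a top bin `[α, 1]`. The Simes
thresholds are bin endpoints, so whether the test rejects depends only on the vector of bins,
whose coordinates are i.i.d. with mass `α/M` on each low bin and `1 - α` on the top bin. Rotating
the low bins cyclically preserves this law, and by the cycle lemma exactly as many of the `M`
rotations of a bin vector are accepted as it has coordinates in the top bin. Averaging over the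
rotations, the acceptance probability is `E[#top] / M = 1 - α`.
-/

open MeasureTheory Finset

section SkipFreeWalk

variable {M d : ℕ} [NeZero M] {F : ℕ → ℤ}

def windowMin (F : ℕ → ℤ) (M : ℕ) [NeZero M] (n : ℕ) : ℤ :=
  (range M).inf' (nonempty_range_iff.mpr (NeZero.ne M)) fun r => F (n + r)

lemma windowMin_le {r : ℕ} (hr : r < M) (n : ℕ) : windowMin F M n ≤ F (n + r) :=
  inf'_le _ (mem_range.mpr hr)

lemma le_windowMin_iff {x : ℤ} {n : ℕ} : x ≤ windowMin F M n ↔ ∀ r < M, x ≤ F (n + r) := by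
  simp [windowMin, le_inf'_iff]

lemma exists_windowMin_eq (n : ℕ) : ∃ r < M, windowMin F M n = F (n + r) := by
  obtain ⟨r, hr, h⟩ :=
    exists_mem_eq_inf' (nonempty_range_iff.mpr (NeZero.ne M)) fun r => F (n + r)
  exact ⟨r, mem_range.mp hr, h⟩

lemma windowMin_add_period (hper : ∀ n, F (n + M) = F n + d) (n : ℕ) :
    windowMin F M (n + M) = windowMin F M n + d := by
  obtain ⟨r, hr, h⟩ := exists_windowMin_eq (F := F) (M := M) n
  refine le_antisymm ?_ (le_windowMin_iff.mpr fun r' hr' => ?_)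
  · calc windowMin F M (n + M) ≤ F (n + M + r) := windowMin_le hr _
      _ = windowMin F M n + d := by rw [h, ← hper, add_right_comm]
  · rw [add_right_comm, hper]
    linarith [windowMin_le (F := F) hr' n]

lemma windowMin_eq_min_succ (hper : ∀ n, F (n + M) = F n + d) (n : ℕ) :
    windowMin F M n = min (F n) (windowMin F M (n + 1)) := by
  have h0 : windowMin F M n ≤ F n := by simpa using windowMin_le (F := F) (NeZero.pos M) n
  refine le_antisymm (le_min h0 (le_windowMin_iff.mpr fun r hr => ?_))
    (le_windowMin_iff.mpr fun r hr => ?_)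
  · rcases (show r + 1 < M ∨ r + 1 = M by omega) with h | h
    · rw [add_assoc, add_comm 1 r]
      exact windowMin_le h n
    · rw [add_assoc, add_comm 1 r, h, hper]
      omega
  · rcases r with _ | r
    · simp
    · rw [← add_comm 1 r, ← add_assoc]
      exact (min_le_right _ _).trans (windowMin_le (by omega) (n + 1))

lemma windowMin_succ (hper : ∀ n, F (n + M) = F n + d) (hstep : ∀ n, F (n + 1) ≤ F n + 1)
    (n : ℕ) :
    windowMin F M (n + 1) = windowMin F M n + if F n < windowMin F M (n + 1) then 1 else 0 := by
  have hmin := windowMin_eq_min_succ hper n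
  have hle : windowMin F M (n + 1) ≤ F n + 1 :=
    (windowMin_le (NeZero.pos M) (n + 1)).trans (by simpa using hstep n)
  split_ifs with h
  · rw [hmin, min_eq_left h.le]
    omega
  · rw [hmin, min_eq_right (not_lt.mp h)]
    simp

/-- The cycle lemma for walks with upward steps of size at most one. Since `windowMin F M`
increases by one exactly at the starting points counted here, the count telescopes to
`windowMin F M M - windowMin F M 0 = d`. -/
theorem card_forall_lt_eq_of_skipFree (hper : ∀ n, F (n + M) = F n + d)
    (hstep : ∀ n, F (n + 1) ≤ F n + 1) :
    #{c : Fin M | ∀ r : Fin M, F c < F (c + r + 1)} = d := by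
  have hcond (c : ℕ) : (∀ r : Fin M, F c < F (c + r + 1)) ↔ F c < windowMin F M (c + 1) := by
    rw [← Int.add_one_le_iff, le_windowMin_iff, Fin.forall_iff]
    refine forall₂_congr fun r _ => ?_
    rw [Int.add_one_le_iff, add_right_comm]
  have htele : ∑ c ∈ range M, (windowMin F M (c + 1) - windowMin F M c) = d := by
    have h := windowMin_add_period hper 0
    rw [zero_add] at h
    rw [sum_range_sub, h]
    ring
  suffices (#{c : Fin M | ∀ r : Fin M, F c < F (c + r + 1)} : ℤ) = d by exact_mod_cast this
  rw [natCast_card_filter, ← htele,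
    Fin.sum_univ_eq_sum_range (fun c => if ∀ r : Fin M, F c < F (c + r + 1) then (1 : ℤ) else 0)]
  refine sum_congr rfl fun c _ => ?_
  rw [windowMin_succ hper hstep c, add_sub_cancel_left]
  simp only [hcond]

end SkipFreeWalk

section Rotation

open Fin.NatCast

variable {M : ℕ} [NeZero M]

def SimesAccepts (h : Fin M → Option (Fin M)) : Prop :=
  ∀ m : Fin M, #{i | ∃ v ≤ m, h i = some v} ≤ m

instance : DecidablePred (SimesAccepts (M := M)) := fun h => by
  unfold SimesAccepts
  infer_instance

def rotateBins (c : Fin M) : (Fin M → Option (Fin M)) ≃ (Fin M → Option (Fin M)) :=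
  Equiv.piCongrRight fun _ => Equiv.optionCongr (Equiv.subRight c)

lemma rotateBins_apply (c : Fin M) (g : Fin M → Option (Fin M)) (i : Fin M) :
    rotateBins c g i = (g i).map (· - c) := rfl

-- The cast `ℕ → Fin M` reduces modulo `M`: the bins are read cyclically, so `binCount g` is
-- `M`-periodic.
def binCount (g : Fin M → Option (Fin M)) (t : ℕ) : ℕ := #{i | g i = some (t : Fin M)}

def binWalk (g : Fin M → Option (Fin M)) (n : ℕ) : ℤ := n - ∑ t ∈ range n, (binCount g t : ℤ)

lemma binWalk_succ_le (g : Fin M → Option (Fin M)) (n : ℕ) :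
    binWalk g (n + 1) ≤ binWalk g n + 1 := by
  simp only [binWalk, sum_range_succ]
  push_cast
  omega

lemma binWalk_add (g : Fin M → Option (Fin M)) (n k : ℕ) :
    binWalk g (n + k) = binWalk g n + k - ∑ r ∈ range k, (binCount g (n + r) : ℤ) := by
  simp only [binWalk, sum_range_add]
  push_cast
  ring

lemma sum_binCount_range_add_card_eq_none (g : Fin M → Option (Fin M)) :
    ∑ t ∈ range M, binCount g t + #{i | g i = none} = M := by
  have hfib := card_eq_sum_card_fiberwise (f := g) (s := univ) (t := univ) (by simp)
  rw [Fintype.sum_option, card_univ, Fintype.card_fin] at hfib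
  rw [← Fin.sum_univ_eq_sum_range]
  simp only [binCount, Fin.cast_val_eq_self]
  omega

lemma binWalk_add_period (g : Fin M → Option (Fin M)) (n : ℕ) :
    binWalk g (n + M) = binWalk g n + #{i | g i = none} := by
  have hM : binWalk g M = #{i | g i = none} := by
    have h := sum_binCount_range_add_card_eq_none g
    rw [binWalk, ← Nat.cast_sum]
    omega
  have hper (r : ℕ) : binCount g (M + r) = binCount g r := by simp [binCount]
  rw [add_comm n M, binWalk_add, hM]
  simp only [hper, binWalk]
  ring

lemma natCast_add_eq_iff {c v : Fin M} {r : ℕ} (hr : r < M) :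
    ((c + r : ℕ) : Fin M) = v ↔ r = (v - c : Fin M) := by
  rw [Nat.cast_add, Fin.cast_val_eq_self, ← eq_sub_iff_add_eq', Fin.ext_iff, Fin.val_natCast,
    Nat.mod_eq_of_lt hr]

lemma sum_binCount_eq_card (g : Fin M → Option (Fin M)) (c m : Fin M) :
    ∑ r ∈ range (m + 1), binCount g (c + r) = #{i | ∃ v, v - c ≤ m ∧ g i = some v} := by
  simp only [binCount, card_eq_sum_ones, sum_filter]
  rw [sum_comm]
  refine sum_congr rfl fun i _ => ?_
  rcases g i with _ | v
  · simp
  · simp only [Option.some.injEq, exists_eq_right']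
    have hiff : ∀ r ∈ range (m + 1), (v = ((c + r : ℕ) : Fin M) ↔ r = (v - c : Fin M)) :=
      fun r hr => eq_comm.trans (natCast_add_eq_iff (by simp at hr; omega))
    rw [sum_congr rfl fun r hr => if_congr (hiff r hr) rfl rfl, sum_ite_eq']
    simp only [mem_range, Nat.lt_succ_iff, Fin.le_iff_val_le_val]

lemma binWalk_lt_iff (g : Fin M → Option (Fin M)) (c m : Fin M) :
    binWalk g c < binWalk g (c + m + 1) ↔ #{i | ∃ v, v - c ≤ m ∧ g i = some v} ≤ m := by
  rw [add_assoc, binWalk_add, ← sum_binCount_eq_card, ← Nat.cast_sum]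
  omega

theorem card_simesAccepts_rotateBins (g : Fin M → Option (Fin M)) :
    #{c | SimesAccepts (rotateBins c g)} = #{i | g i = none} := by
  rw [← card_forall_lt_eq_of_skipFree (binWalk_add_period g) (binWalk_succ_le g)]
  refine congrArg card (filter_congr fun c _ => forall_congr' fun m => ?_)
  rw [binWalk_lt_iff]
  simp only [rotateBins_apply, Option.map_eq_some_iff, existsAndEq, and_true]

end Rotation

section WeightedCount

lemma sum_ite_apply_eq_mul_pow {ι κ R : Type*} [Fintype ι] [DecidableEq ι] [Fintype κ]
    [DecidableEq κ] [CommSemiring R] (w : κ → R) (i : ι) (k : κ) :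
    ∑ g : ι → κ, (if g i = k then ∏ j, w (g j) else 0)
      = w k * (∑ v, w v) ^ (Fintype.card ι - 1) := by
  set w' : ι → κ → R := fun j v => if j = i ∧ v ≠ k then 0 else w v
  have hprod (g : ι → κ) : ∏ j, w' j (g j) = if g i = k then ∏ j, w (g j) else 0 := by
    split_ifs with h
    · refine prod_congr rfl fun j _ => ?_
      simp only [w', ite_eq_right_iff]
      rintro ⟨rfl, hj⟩
      exact absurd h hj
    · exact prod_eq_zero (mem_univ i) (by simp [w', h])
  have hfactor (j : ι) : ∑ v, w' j v = if j = i then w k else ∑ v, w v := by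
    split_ifs with h <;> simp [w', h]
  simp_rw [← hprod, ← Fintype.prod_sum, hfactor]
  rw [Fintype.prod_eq_mul_prod_compl i, if_pos rfl,
    prod_congr rfl fun j hj => if_neg (by simpa using hj), prod_const, card_compl, card_singleton]

variable {M : ℕ} [NeZero M] {R : Type*} [CommRing R] [IsDomain R] [CharZero R]

theorem sum_prod_simesAccepts (a b : R) :
    ∑ g : Fin M → Option (Fin M) with SimesAccepts g, ∏ i, (g i).elim b (fun _ => a)
      = b * (M * a + b) ^ (M - 1) := by
  set W : (Fin M → Option (Fin M)) → R := fun g => ∏ i, (g i).elim b (fun _ => a)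
  have hrot (c : Fin M) (g : Fin M → Option (Fin M)) : W (rotateBins c g) = W g :=
    prod_congr rfl fun i _ => by cases h : g i <;> simp [rotateBins_apply, h]
  have hmarg (i : Fin M) : ∑ g, (if g i = none then W g else 0) = b * (M * a + b) ^ (M - 1) := by
    rw [sum_ite_apply_eq_mul_pow (fun v : Option (Fin M) => v.elim b fun _ => a),
      Fintype.sum_option]
    simp [add_comm]
  have hcount (p : Fin M → Prop) [DecidablePred p] (x : R) :
      (#{c | p c} : R) * x = ∑ c, if p c then x else 0 := by
    rw [← sum_filter, sum_const, nsmul_eq_mul]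
  refine mul_left_cancel₀ (Nat.cast_ne_zero.mpr (NeZero.ne M) : (M : R) ≠ 0) ?_
  calc (M : R) * ∑ g with SimesAccepts g, W g
      = ∑ c : Fin M, ∑ g, (if SimesAccepts (rotateBins c g) then W (rotateBins c g) else 0) := by
        simp only [(rotateBins _).sum_comp (fun g => if SimesAccepts g then W g else 0),
          sum_const, card_univ, Fintype.card_fin, nsmul_eq_mul, sum_filter]
    _ = ∑ g, (#{c | SimesAccepts (rotateBins c g)} : R) * W g := by
        simp only [hrot]
        exact sum_comm.trans (sum_congr rfl fun g _ => (hcount _ _).symm)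
    _ = ∑ i : Fin M, ∑ g, (if g i = none then W g else 0) := by
        simp only [card_simesAccepts_rotateBins]
        exact (sum_congr rfl fun g _ => hcount _ _).trans sum_comm
    _ = M * (b * (M * a + b) ^ (M - 1)) := by
        simp [hmarg]

theorem sum_prod_not_simesAccepts {a b : R} (hab : M * a + b = 1) :
    ∑ g : Fin M → Option (Fin M) with ¬SimesAccepts g, ∏ i, (g i).elim b (fun _ => a) = 1 - b := by
  have htotal : ∑ g : Fin M → Option (Fin M), ∏ i, (g i).elim b (fun _ => a) = 1 := by
    rw [← Fintype.prod_sum (fun (_ : Fin M) (v : Option (Fin M)) => v.elim b fun _ => a)]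
    simp [Fintype.sum_option, add_comm b, hab]
  rw [← htotal, ← sum_filter_add_sum_filter_not univ SimesAccepts, sum_prod_simesAccepts, hab,
    one_pow, mul_one, add_sub_cancel_left]

end WeightedCount

section Binning

open Fin.NatCast

variable {M : ℕ} [NeZero M] {a x : ℝ}

-- Negative `x` land in bin `0` because `⌊·⌋₊` truncates; this is why
-- `exists_le_simesBin_iff` holds for every real `x`.
noncomputable def simesBin (M : ℕ) [NeZero M] (a x : ℝ) : Option (Fin M) :=
  if x < M * a then some (⌊x / a⌋₊ : Fin M) else none

lemma floor_div_lt_of_lt_mul (ha : 0 < a) (hx : x < M * a) : ⌊x / a⌋₊ < M :=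
  (Nat.floor_lt' (NeZero.ne M)).mpr ((div_lt_iff₀ ha).mpr hx)

lemma val_natCast_floor_div (ha : 0 < a) (hx : x < M * a) :
    ((⌊x / a⌋₊ : Fin M) : ℕ) = ⌊x / a⌋₊ :=
  Fin.val_cast_of_lt (floor_div_lt_of_lt_mul ha hx)

lemma exists_le_simesBin_iff (ha : 0 ≤ a) (m : Fin M) (x : ℝ) :
    (∃ v ≤ m, simesBin M a x = some v) ↔ x < (m + 1) * a := by
  have hmM : ((m : ℕ) + 1 : ℝ) ≤ M := by exact_mod_cast m.isLt
  unfold simesBin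
  split_ifs with hx
  · simp only [Option.some.injEq, exists_eq_right']
    rcases ha.eq_or_lt with rfl | ha
    · simp_all
    · rw [Fin.le_iff_val_le_val, val_natCast_floor_div ha hx, ← Nat.lt_succ_iff,
        Nat.floor_lt' (by simp), div_lt_iff₀ ha]
      push_cast
      rfl
  · simp only [and_false, exists_false, false_iff, not_lt]
    exact (mul_le_mul_of_nonneg_right hmM ha).trans (not_lt.mp hx)

lemma simesBin_eq_some_iff (ha : 0 ≤ a) (hx : 0 ≤ x) (j : Fin M) :
    simesBin M a x = some j ↔ x ∈ Set.Ico (j * a) ((j + 1) * a) := by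
  have hjM : ((j : ℕ) + 1 : ℝ) ≤ M := by exact_mod_cast j.isLt
  unfold simesBin
  split_ifs with h
  · rcases ha.eq_or_lt with rfl | ha
    · simp at h
      linarith
    rw [Option.some.injEq, Fin.ext_iff, val_natCast_floor_div ha h,
      Nat.floor_eq_iff (div_nonneg hx ha.le), le_div_iff₀ ha, div_lt_iff₀ ha, Set.mem_Ico]
  · simp only [false_iff, Set.mem_Ico, not_and, not_lt]
    exact fun _ => (mul_le_mul_of_nonneg_right hjM ha).trans (not_lt.mp h)

lemma simesBin_eq_none_iff : simesBin M a x = none ↔ M * a ≤ x := by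
  unfold simesBin
  split_ifs with h <;> simp [h, not_lt.mp]

lemma measurableSet_simesBin_preimage (s : Set (Option (Fin M))) :
    MeasurableSet (simesBin M a ⁻¹' s) := by
  have hs : simesBin M a ⁻¹' s =
      {x | x < M * a} ∩ (fun x => ⌊x / a⌋₊) ⁻¹' {n | some (n : Fin M) ∈ s}
        ∪ {x | M * a ≤ x} ∩ {_x | none ∈ s} := by
    ext x
    by_cases h : x < M * a <;> simp [simesBin, h, not_lt.mp]
  rw [hs]
  exact ((measurableSet_lt measurable_id measurable_const).inter
    ((measurable_id.div_const a).nat_floor MeasurableSet.of_discrete)).union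
    ((measurableSet_le measurable_const measurable_id).inter (MeasurableSet.const _))

lemma uniform_simesBin_preimage (ha : 0 ≤ a) (hMa : M * a ≤ 1) (v : Option (Fin M)) :
    volume.restrict (Set.Icc (0 : ℝ) 1) (simesBin M a ⁻¹' {v})
      = ENNReal.ofReal (v.elim (1 - M * a) fun _ => a) := by
  rw [Measure.restrict_apply (measurableSet_simesBin_preimage _)]
  cases v with
  | none =>
    have hset : simesBin M a ⁻¹' {none} ∩ Set.Icc 0 1 = Set.Icc (M * a) 1 := by
      ext x
      simp only [Set.mem_inter_iff, Set.mem_preimage, Set.mem_singleton_iff,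
        simesBin_eq_none_iff, Set.mem_Icc]
      constructor
      · rintro ⟨h, -, h1⟩
        exact ⟨h, h1⟩
      · rintro ⟨h, h1⟩
        exact ⟨h, (by positivity : (0 : ℝ) ≤ M * a).trans h, h1⟩
    rw [hset, Real.volume_Icc]
    rfl
  | some j =>
    have hjM : ((j : ℕ) + 1 : ℝ) ≤ M := by exact_mod_cast j.isLt
    have hset : simesBin M a ⁻¹' {some j} ∩ Set.Icc 0 1 = Set.Ico (j * a) ((j + 1) * a) := by
      ext x
      simp only [Set.mem_inter_iff, Set.mem_preimage, Set.mem_singleton_iff, Set.mem_Icc]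
      constructor
      · rintro ⟨h, h0, -⟩
        exact (simesBin_eq_some_iff ha h0 j).mp h
      · intro h
        have h0 : 0 ≤ x := (by positivity : (0 : ℝ) ≤ j * a).trans h.1
        refine ⟨(simesBin_eq_some_iff ha h0 j).mpr h, h0, ?_⟩
        nlinarith [h.2]
    rw [hset, Real.volume_Ico]
    simp only [Option.elim_some]
    ring_nf

lemma exists_le_card_iff_not_simesAccepts {α : ℝ} (hα : 0 ≤ α) (u : Fin M → ℝ) :
    (∃ m : Fin M, (m : ℕ) + 1 ≤ #{i | u i < ((m : ℕ) + 1) / M * α})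
      ↔ ¬SimesAccepts fun i => simesBin M (α / M) (u i) := by
  simp only [SimesAccepts, not_forall, not_le,
    exists_le_simesBin_iff (by positivity : 0 ≤ α / M), div_mul_eq_mul_div, mul_div_assoc]
  exact exists_congr fun m => Nat.lt_iff_add_one_le.symm

end Binning

theorem measure_setOf_eq_sum_prod {Ω ι β κ : Type*} [MeasurableSpace Ω] [MeasurableSpace β]
    {μ : Measure Ω} [Fintype ι] [DecidableEq ι] [Fintype κ] {X : ι → Ω → β}
    (hX : ProbabilityTheory.iIndepFun X μ) (hmeas : ∀ i, Measurable (X i)) {f : β → κ}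
    (hf : ∀ k, MeasurableSet (f ⁻¹' {k})) (p : (ι → κ) → Prop) [DecidablePred p] :
    μ {ω | p fun i => f (X i ω)} = ∑ g with p g, ∏ i, μ (X i ⁻¹' (f ⁻¹' {g i})) := by
  have hfib (g : ι → κ) :
      (fun ω i => f (X i ω)) ⁻¹' {g} = ⋂ i ∈ (univ : Finset ι), X i ⁻¹' (f ⁻¹' {g i}) := by
    ext ω
    simp [funext_iff]
  rw [← show (fun ω i => f (X i ω)) ⁻¹' ↑({g | p g} : Finset (ι → κ)) = {ω | p fun i => f (X i ω)}
    by ext; simp, ← sum_measure_preimage_singleton]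
  · exact sum_congr rfl fun g _ => by
      rw [hfib, hX.measure_inter_preimage_eq_mul _ fun i _ => hf (g i)]
  · intro g _
    rw [hfib]
    exact Finset.measurableSet_biInter _ fun i _ => hmeas i (hf (g i))

theorem simes_equality_general {Ω : Type*} [MeasurableSpace Ω]
    (μ : Measure Ω) (M : ℕ) (hM : 1 ≤ M)
    (U : Fin M → Ω → ℝ) (hmeas : ∀ i, Measurable (U i))
    (hindep : ProbabilityTheory.iIndepFun U μ)
    (hunif : ∀ i, Measure.map (U i) μ = (volume.restrict (Set.Icc (0 : ℝ) 1)))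
    (α : ℝ) (hα : α ∈ Set.Icc (0 : ℝ) 1) :
    (μ {ω | ∃ m : Fin M, ((m : ℕ) + 1) ≤
        (Finset.univ.filter (fun i : Fin M => U i ω < (((m : ℕ) + 1) / M) * α)).card }).toReal
      = α := by
  obtain ⟨hα0, hα1⟩ := hα
  have : NeZero M := ⟨by omega⟩
  have hMa : (M : ℝ) * (α / M) = α := mul_div_cancel₀ α (by simp [NeZero.ne M])
  have hlaw (i : Fin M) (v : Option (Fin M)) : μ (U i ⁻¹' (simesBin M (α / M) ⁻¹' {v}))
      = ENNReal.ofReal (v.elim (1 - α) fun _ => α / M) := by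
    rw [← Measure.map_apply (hmeas i) (measurableSet_simesBin_preimage _), hunif,
      uniform_simesBin_preimage (by positivity) (hMa.trans_le hα1), hMa]
  have hw (v : Option (Fin M)) : 0 ≤ v.elim (1 - α) fun _ => α / M := by
    cases v <;> simp [hα1, div_nonneg hα0 (Nat.cast_nonneg M)]
  simp only [exists_le_card_iff_not_simesAccepts hα0]
  rw [measure_setOf_eq_sum_prod hindep hmeas (fun _ => measurableSet_simesBin_preimage _)
      fun g => ¬SimesAccepts g]
  simp only [hlaw]
  rw [ENNReal.toReal_sum fun g _ => ENNReal.prod_ne_top fun i _ => ENNReal.ofReal_ne_top]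
  simp only [ENNReal.toReal_prod, ENNReal.toReal_ofReal (hw _)]
  rw [sum_prod_not_simesAccepts (by rw [hMa, add_sub_cancel]), sub_sub_cancel]

/-- Simes' inequality (equality case for independent uniforms): if `U 1, ..., U M` are i.i.d.
uniform random variables on `[0,1]` and `p 1 ≤ ... ≤ p M` denote their increasing rearrangement,
then for any `α ∈ [0,1]` the probability that `p m < (m/M)·α` for at least one `m` equals `α`.
(The event that the `m`-th order statistic is `< c` is the event that at least `m` of the
variables are `< c`.) -/
theorem simes_equality {Ω : Type*} [MeasurableSpace Ω]
    (μ : Measure Ω) [IsProbabilityMeasure μ] (M : ℕ) (hM : 1 ≤ M)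
    (U : Fin M → Ω → ℝ) (hmeas : ∀ i, Measurable (U i))
    (hindep : ProbabilityTheory.iIndepFun U μ)
    (hunif : ∀ i, Measure.map (U i) μ = (volume.restrict (Set.Icc (0 : ℝ) 1)))
    (α : ℝ) (hα : α ∈ Set.Icc (0 : ℝ) 1) :
    (μ {ω | ∃ m : Fin M, ((m : ℕ) + 1) ≤
        (Finset.univ.filter (fun i : Fin M => U i ω < (((m : ℕ) + 1) / M) * α)).card }).toReal
      = α :=
  simes_equality_general μ M hM U hmeas hindep hunif α hα
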